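/- arXiv:2507.05775 — 5 statements merged into one kernel-verified Lean document; each statement's English description precedes it below -/
import Mathlib

section
/- For every probability mass function p with infinite support and every t > 0, there exists a unique positive real w_t satisfying w_t = Σ_{i≥1} t·p_i/(t·p_i + w_t). -/
open scoped BigOperators

/-- For every probability mass function `p` with infinite support and
every `t > 0`, there exists a unique positive real `w` satisfying
`w = Σ_i t p_i/(t p_i + w)`. -/
theorem stmt2 (p : ℕ → ℝ) (hp : ∀ i, 0 ≤ p i) (hp0 : p 0 = 0)
    (hpsum : ∑' i, p i = 1) (hinf : {i : ℕ | 0 < p i}.Infinite)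
    (t : ℝ) (ht : 0 < t) :
    ∃! w : ℝ, 0 < w ∧ w = ∑' i, t * p i / (t * p i + w) := by
  have hP : Summable p := by
    by_contra h
    rw [tsum_eq_zero_of_not_summable h] at hpsum
    norm_num at hpsum
  -- nonnegativity of terms
  have hterm_nonneg : ∀ (w : ℝ), 0 < w → ∀ i, 0 ≤ t * p i / (t * p i + w) := fun w hw i =>
    div_nonneg (mul_nonneg ht.le (hp i)) (by have := mul_nonneg ht.le (hp i); linarith)
  -- summability
  have hsum : ∀ (w : ℝ), 0 < w → Summable (fun i => t * p i / (t * p i + w)) := by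
    intro w hw
    refine Summable.of_nonneg_of_le (hterm_nonneg w hw) (fun i => ?_) (hP.mul_left (t / w))
    have : t / w * p i = t * p i / w := by ring
    rw [this]
    gcongr
    · exact mul_nonneg ht.le (hp i)
    · linarith [mul_nonneg ht.le (hp i)]
  set F : ℝ → ℝ := fun w => ∑' i, t * p i / (t * p i + w) with hF
  -- F is (strictly where it matters) decreasing
  have hmono : ∀ w₁ w₂ : ℝ, 0 < w₁ → w₁ < w₂ → F w₂ < F w₁ := by
    intro w₁ w₂ hw₁ hlt
    obtain ⟨i0, hi0⟩ := hinf.nonempty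
    have hw₂ : 0 < w₂ := hw₁.trans hlt
    refine Summable.tsum_lt_tsum (i := i0) ?_ ?_ (hsum w₂ hw₂) (hsum w₁ hw₁)
    · intro i
      exact div_le_div_of_nonneg_left (mul_nonneg ht.le (hp i))
        (by linarith [mul_nonneg ht.le (hp i)]) (by linarith)
    · have hnum : 0 < t * p i0 := mul_pos ht hi0
      exact div_lt_div_of_pos_left hnum (by linarith) (by linarith)
  -- uniqueness part
  have huniq : ∀ w₁ w₂ : ℝ, (0 < w₁ ∧ w₁ = F w₁) → (0 < w₂ ∧ w₂ = F w₂) → w₁ = w₂ := by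
    intro w₁ w₂ ⟨h1, e1⟩ ⟨h2, e2⟩
    rcases lt_trichotomy w₁ w₂ with h | h | h
    · have := hmono w₁ w₂ h1 h
      rw [← e1, ← e2] at this; linarith
    · exact h
    · have := hmono w₂ w₁ h2 h
      rw [← e1, ← e2] at this; linarith
  -- existence: IVT on [a, b]
  obtain ⟨i0, hi0⟩ := hinf.nonempty
  set c : ℝ := t * p i0 with hc
  have hcpos : 0 < c := mul_pos ht hi0
  set a : ℝ := min (c / 2) (1 / 2) with ha
  have hapos : 0 < a := lt_min (by linarith) (by norm_num)
  have hac : a ≤ c / 2 := min_le_left _ _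
  have hah : a ≤ 1 / 2 := min_le_right _ _
  set b : ℝ := max (a + 1) (t + 1) with hb
  have hab : a < b := lt_of_lt_of_le (by linarith) (le_max_left _ _)
  have hb1 : 1 ≤ b := le_trans (by linarith) (le_max_left _ _)
  have hbt : t < b := lt_of_lt_of_le (by linarith) (le_max_right _ _)
  -- F continuous on [a,b]
  have hcont : ContinuousOn F (Set.Icc a b) := by
    apply continuousOn_tsum (u := fun i => t / a * p i)
    · intro i
      apply ContinuousOn.div continuousOn_const (continuousOn_const.add continuousOn_id)
      intro x hx
      have h0 : 0 < t * p i + x := by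
        have := mul_nonneg ht.le (hp i); have := hx.1; linarith
      simpa [id_eq] using h0.ne'
    · exact hP.mul_left _
    · intro i x hx
      have hxa : a ≤ x := hx.1
      have hxpos : 0 < x := lt_of_lt_of_le hapos hxa
      rw [Real.norm_eq_abs, abs_of_nonneg (hterm_nonneg x hxpos i)]
      have : t / a * p i = t * p i / a := by ring
      rw [this]
      gcongr
      · exact mul_nonneg ht.le (hp i)
      · linarith [mul_nonneg ht.le (hp i)]
  -- F a > a
  have hFa : a < F a := by
    have h1 : c / (c + a) ≤ F a := by
      have := Summable.le_tsum (hsum a hapos) i0 (fun i _ => hterm_nonneg a hapos i)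
      simpa [hc] using this
    have h2 : a < c / (c + a) := by
      rw [lt_div_iff₀ (by linarith)]
      nlinarith
    linarith
  -- F b < b
  have hFb : F b < b := by
    have hbpos : 0 < b := by linarith
    have h1 : F b ≤ t / b := by
      have hle : F b ≤ ∑' i, t / b * p i := by
        apply Summable.tsum_le_tsum _ (hsum b hbpos) (hP.mul_left _)
        intro i
        have : t / b * p i = t * p i / b := by ring
        rw [this]
        gcongr
        · exact mul_nonneg ht.le (hp i)
        · linarith [mul_nonneg ht.le (hp i)]
      rwa [tsum_mul_left, hpsum, mul_one] at hle
    have h2 : t / b < b := by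
      rw [div_lt_iff₀ hbpos]
      nlinarith
    linarith
  -- IVT on g = F - id
  have hg : ContinuousOn (fun w => F w - w) (Set.Icc a b) :=
    hcont.sub continuousOn_id
  have hmem : (0 : ℝ) ∈ Set.Icc ((fun w => F w - w) b) ((fun w => F w - w) a) :=
    ⟨by simp; linarith, by simp; linarith⟩
  obtain ⟨w, hw, hweq⟩ := intermediate_value_Icc' hab.le hg hmem
  refine ⟨w, ⟨lt_of_lt_of_le hapos hw.1, ?_⟩, fun y hy => huniq y w hy ⟨lt_of_lt_of_le hapos hw.1, ?_⟩⟩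
  · simp at hweq; linarith [hweq]
  · simp at hweq; linarith [hweq]
end

section
/- The map t ↦ w_t/t is non-increasing on (0,∞); consequently, for every t > 0 and ε ∈ (0,1), (1−ε) w_t ≤ w_{t(1−ε)}. -/
open scoped BigOperators

/-- The map `t ↦ w_t/t` is non-increasing on `(0,∞)`, and consequently,
for every `t > 0` and `ε ∈ (0,1)`, `(1−ε) w_t ≤ w_{t(1−ε)}`. Here, for each `t > 0`,
`w t` is the unique positive solution of `w_t = Σ_i t p_i/(t p_i + w_t)`. -/
theorem stmt5 (p : ℕ → ℝ) (hp : ∀ i, 0 ≤ p i) (hp0 : p 0 = 0)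
    (hpsum : ∑' i, p i = 1) (hinf : {i : ℕ | 0 < p i}.Infinite)
    (w : ℝ → ℝ)
    (hw : ∀ t > (0 : ℝ), 0 < w t ∧ w t = ∑' i, t * p i / (t * p i + w t)) :
    (∀ s t : ℝ, 0 < s → s ≤ t → w t / t ≤ w s / s) ∧
      (∀ t > (0 : ℝ), ∀ ε ∈ Set.Ioo (0 : ℝ) 1, (1 - ε) * w t ≤ w (t * (1 - ε))) := by
  have hSp : Summable p := by
    by_contra h
    rw [tsum_eq_zero_of_not_summable h] at hpsum
    norm_num at hpsum
  have hsum : ∀ u : ℝ, 0 < u → Summable (fun i => p i / (p i + u)) := by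
    intro u hu
    apply Summable.of_nonneg_of_le
      (fun i => div_nonneg (hp i) (by linarith [hp i])) (fun i => ?_)
      (hSp.mul_right u⁻¹)
    rw [← div_eq_mul_inv]
    apply div_le_div_of_nonneg_left (hp i) hu
    linarith [hp i]
  have hkey : ∀ t > (0 : ℝ), w t = ∑' i, p i / (p i + w t / t) := by
    intro t ht
    have hwt := (hw t ht).1
    conv_lhs => rw [(hw t ht).2]
    refine tsum_congr fun i => ?_
    have h1 : 0 < t * p i + w t := by
      have := mul_nonneg ht.le (hp i); linarith
    have h2 : 0 < p i + w t / t :=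
      add_pos_of_nonneg_of_pos (hp i) (div_pos hwt ht)
    rw [div_eq_div_iff h1.ne' h2.ne']
    field_simp
  have mono : ∀ s t : ℝ, 0 < s → s ≤ t → w t / t ≤ w s / s := by
    intro s t hs hst
    have ht : 0 < t := hs.trans_le hst
    have hupos : 0 < w t / t := div_pos (hw t ht).1 ht
    have hvpos : 0 < w s / s := div_pos (hw s hs).1 hs
    by_contra hcon
    push_neg at hcon
    have hle : ∑' i, p i / (p i + w t / t) ≤ ∑' i, p i / (p i + w s / s) := by
      refine Summable.tsum_le_tsum (fun i => ?_) (hsum _ hupos) (hsum _ hvpos)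
      apply div_le_div_of_nonneg_left (hp i) (add_pos_of_nonneg_of_pos (hp i) hvpos)
      linarith
    rw [← hkey t ht, ← hkey s hs] at hle
    have hwt : w t = t * (w t / t) := by field_simp
    have hws : w s = s * (w s / s) := by field_simp
    nlinarith [mul_le_mul_of_nonneg_right hst hvpos.le,
      mul_lt_mul_of_pos_left hcon ht]
  refine ⟨mono, fun t ht ε hε => ?_⟩
  have h1 : (0:ℝ) < 1 - ε := by linarith [hε.2]
  have ht' : 0 < t * (1 - ε) := mul_pos ht h1
  have hle := mono (t * (1 - ε)) t ht' (by nlinarith [hε.1])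
  calc (1 - ε) * w t = (t * (1 - ε)) * (w t / t) := by field_simp
    _ ≤ (t * (1 - ε)) * (w (t * (1 - ε)) / (t * (1 - ε))) :=
        mul_le_mul_of_nonneg_left hle ht'.le
    _ = w (t * (1 - ε)) := by field_simp
end

section
/- For every t > 0, Σ_{i≥1} t·p_i/(t·p_i + w_t)^2 ≤ 4, where w_t is the unique positive solution of w = Σ_{i≥1} t p_i/(t p_i + w). -/
open scoped BigOperators

/-- For every `t > 0`, `Σ_i t p_i/(t p_i + w_t)² ≤ 4`, where `w_t` is the
unique positive solution of `w = Σ_i t p_i/(t p_i + w)`. -/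
theorem stmt6 (p : ℕ → ℝ) (hp : ∀ i, 0 ≤ p i) (hp0 : p 0 = 0)
    (hpsum : ∑' i, p i = 1) (hinf : {i : ℕ | 0 < p i}.Infinite)
    (t : ℝ) (ht : 0 < t)
    (w : ℝ) (hw_pos : 0 < w) (hw : w = ∑' i, t * p i / (t * p i + w)) :
    ∑' i, t * p i / (t * p i + w) ^ 2 ≤ 4 := by
  have hs : Summable p := by
    by_contra h
    rw [tsum_eq_zero_of_not_summable h] at hpsum
    norm_num at hpsum
  have hden : ∀ i, 0 < t * p i + w := fun i =>
    add_pos_of_nonneg_of_pos (mul_nonneg ht.le (hp i)) hw_pos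
  have hg : Summable (fun i => t * p i / (t * p i + w)) := by
    apply Summable.of_nonneg_of_le
      (fun i => div_nonneg (mul_nonneg ht.le (hp i)) (hden i).le)
      (fun i => div_le_div_of_nonneg_left (mul_nonneg ht.le (hp i)) hw_pos
        (le_add_of_nonneg_left (mul_nonneg ht.le (hp i))))
    exact (hs.mul_left t).div_const w
  have hf : Summable (fun i => t * p i / (t * p i + w) ^ 2) := by
    apply Summable.of_nonneg_of_le
      (fun i => div_nonneg (mul_nonneg ht.le (hp i)) (sq_nonneg _))
      (fun i => div_le_div_of_nonneg_left (mul_nonneg ht.le (hp i)) (pow_pos hw_pos 2)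
        (by nlinarith [mul_nonneg ht.le (hp i), hw_pos.le]))
    exact (hs.mul_left t).div_const (w ^ 2)
  have hle : ∀ i, t * p i / (t * p i + w) ^ 2 ≤ (t * p i / (t * p i + w)) / w := by
    intro i
    rw [div_div]
    apply div_le_div_of_nonneg_left (mul_nonneg ht.le (hp i))
      (mul_pos (hden i) hw_pos)
    nlinarith [mul_nonneg ht.le (hp i), hw_pos.le, (hden i).le]
  calc ∑' i, t * p i / (t * p i + w) ^ 2
      ≤ ∑' i, (t * p i / (t * p i + w)) / w :=
        Summable.tsum_le_tsum hle hf (hg.div_const w)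
    _ = (∑' i, t * p i / (t * p i + w)) / w := tsum_div_const
    _ = w / w := by rw [← hw]
    _ = 1 := div_self hw_pos.ne'
    _ ≤ 4 := by norm_num
end

section
/- De-Poissonization of the upper bound: if for all t > 0, E[L_{N_t}] ≤ f_t where N_t ~ Poisson(t) is independent of the X's, and f satisfies f_{t(1+ε)} ≤ (1+ε) f_t for all ε ∈ (0,1), then limsup_{n→∞} E[L_n]/f_n ≤ 1. -/
open MeasureTheory ProbabilityTheory Filter
open scoped ENNReal


-- linear growth of f
lemma aux_fgrow {f : ℝ → ℝ}
    (hfscale : ∀ t > (0 : ℝ), ∀ ε ∈ Set.Ioo (0 : ℝ) 1, f (t * (1 + ε)) ≤ (1 + ε) * f t) :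
    ∀ x > (0:ℝ), ∀ y, x < y → f y * x ≤ y * f x := by
  have step : ∀ z > (0:ℝ), ∀ y, z < y → y ≤ z * (3/2) → f y * z ≤ y * f z := by
    intro z hz y hzy hy2
    have hε : (y / z - 1) ∈ Set.Ioo (0:ℝ) 1 := by
      constructor
      · have := (div_lt_div_iff₀ hz hz).2 (by nlinarith : y * z > z * z)
        simp only [div_self hz.ne'] at this
        nlinarith [(one_lt_div hz).2 hzy]
      · have : y / z ≤ 3/2 := by rw [div_le_iff₀ hz]; linarith
        linarith
    have := hfscale z hz _ hε
    have hzy' : z * (1 + (y / z - 1)) = y := by field_simp; ring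
    rw [hzy'] at this
    have : f y ≤ (y / z) * f z := by linarith [this]
    calc f y * z ≤ (y / z) * f z * z := by nlinarith
      _ = y * f z := by field_simp
  intro x hx y hxy
  obtain ⟨n, hn⟩ : ∃ n : ℕ, y ≤ x * (3/2)^n := by
    obtain ⟨n, hn⟩ := pow_unbounded_of_one_lt (y / x) (by norm_num : (1:ℝ) < 3/2)
    exact ⟨n, by rw [div_lt_iff₀ hx] at hn; nlinarith⟩
  induction n generalizing y with
  | zero => simp at hn; linarith
  | succ n ih =>
    by_cases h : y ≤ x * (3/2)^n
    · exact ih y hxy h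
    · push_neg at h
      set z := x * (3/2)^n with hzdef
      have hzpos : 0 < z := by positivity
      have hxz : x ≤ z := by
        have : (1:ℝ) ≤ (3/2)^n := one_le_pow₀ (by norm_num)
        nlinarith
      have hstep := step z hzpos y h (by rw [hzdef]; ring_nf; ring_nf at hn; linarith)
      rcases eq_or_lt_of_le hxz with heq | hlt
      · rw [← heq] at hstep; exact hstep
      · have hzle : f z * x ≤ z * f x := ih z hlt le_rfl
        nlinarith [hstep, hzle]


lemma aux_tail (ε : ℝ) (hε : 0 < ε) (n : ℕ) (hn : 1 ≤ n) :
    ∑ k ∈ Finset.range n, Real.exp (-((n:ℝ)*(1+ε))) * ((n:ℝ)*(1+ε))^k / (Nat.factorial k)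
      ≤ (n:ℝ) * ((1+ε)*Real.exp (-ε))^n := by
  set t : ℝ := (n:ℝ)*(1+ε) with ht
  have hn1 : (1:ℝ) ≤ (n:ℝ) := by exact_mod_cast hn
  have htpos : 0 < t := by positivity
  have hnt : (n:ℝ) ≤ t := by nlinarith
  have mono : ∀ a b : ℕ, a ≤ b → b ≤ n → t^a / (Nat.factorial a) ≤ t^b / (Nat.factorial b) := by
    intro a b hab hbn
    induction b, hab using Nat.le_induction with
    | base => exact le_rfl
    | succ b hab ih =>
      refine le_trans (ih (by omega)) ?_
      have hb1 : (b:ℝ)+1 ≤ t := by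
        have : (b:ℝ)+1 ≤ (n:ℝ) := by exact_mod_cast Nat.succ_le_of_lt (by omega)
        linarith
      have heq : t^(b+1) / (Nat.factorial (b+1) : ℝ)
          = t^b / (Nat.factorial b) * (t/((b:ℝ)+1)) := by
        rw [Nat.factorial_succ]
        push_cast
        field_simp
        ring
      rw [heq]
      exact le_mul_of_one_le_right
        (div_nonneg (pow_pos htpos b).le (Nat.cast_nonneg (Nat.factorial b)))
        ((one_le_div (by positivity : (0:ℝ) < (b:ℝ)+1)).2 hb1)
  have hsum : ∑ k ∈ Finset.range n, Real.exp (-t) * t^k / (Nat.factorial k)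
      ≤ (n:ℝ) * (Real.exp (-t) * (t^(n-1) / (Nat.factorial (n-1)))) := by
    have := Finset.sum_le_card_nsmul (Finset.range n)
      (fun k => Real.exp (-t) * t^k / (Nat.factorial k))
      (Real.exp (-t) * (t^(n-1) / (Nat.factorial (n-1))))
      (fun k hk => by
        rw [Finset.mem_range] at hk
        have := mono k (n-1) (by omega) (by omega)
        rw [mul_div_assoc]
        exact mul_le_mul_of_nonneg_left this (Real.exp_pos _).le)
    simpa [nsmul_eq_mul] using this
  refine hsum.trans ?_
  -- t^(n-1)/(n-1)! ≤ (1+ε)^(n-1) * exp n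
  have hfac : t^(n-1) / (Nat.factorial (n-1) : ℝ) ≤ (1+ε)^(n-1) * Real.exp n := by
    have h1 : t^(n-1) = (n:ℝ)^(n-1) * (1+ε)^(n-1) := by rw [ht, mul_pow]
    have h2 : (n:ℝ)^(n-1) / (Nat.factorial (n-1)) ≤ Real.exp n :=
      Real.pow_div_factorial_le_exp (x := (n:ℝ)) (Nat.cast_nonneg n) (n-1)
    rw [h1]
    calc (n:ℝ)^(n-1) * (1+ε)^(n-1) / (Nat.factorial (n-1))
        = ((n:ℝ)^(n-1) / (Nat.factorial (n-1))) * (1+ε)^(n-1) := by ring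
      _ ≤ Real.exp n * (1+ε)^(n-1) := by
          exact mul_le_mul_of_nonneg_right h2 (by positivity)
      _ = (1+ε)^(n-1) * Real.exp n := by ring
  have hpow : (1+ε)^(n-1) ≤ (1+ε)^n := pow_le_pow_right₀ (by linarith) (by omega)
  have hexp : Real.exp (-t) * Real.exp n = (Real.exp (-ε))^n := by
    rw [← Real.exp_add, ← Real.exp_nat_mul]
    congr 1
    rw [ht]; ring
  calc (n:ℝ) * (Real.exp (-t) * (t^(n-1) / (Nat.factorial (n-1))))
      ≤ (n:ℝ) * (Real.exp (-t) * ((1+ε)^n * Real.exp n)) := by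
        refine mul_le_mul_of_nonneg_left (mul_le_mul_of_nonneg_left ?_ (Real.exp_pos _).le)
          (by positivity)
        exact hfac.trans (mul_le_mul_of_nonneg_right hpow (Real.exp_pos _).le)
    _ = (n:ℝ) * ((1+ε)^n * ((Real.exp (-t)) * Real.exp n)) := by ring
    _ = (n:ℝ) * ((1+ε)*Real.exp (-ε))^n := by rw [hexp, ← mul_pow]



/-- de-Poissonization of the upper bound: if for all `t > 0`,
`E[L_{N_t}] ≤ f_t` where `N_t ~ Poisson(t)` is independent of the process `(L_n)`,
and `f` satisfies `f_{t(1+ε)} ≤ (1+ε) f_t` for all `ε ∈ (0,1)`, then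
`limsup_{n→∞} E[L_n]/f_n ≤ 1`. Here `(L_n)` is a nondecreasing sequence of `ℕ`-valued
random variables (the longest increasing subsequence lengths). -/
theorem stmt12 {Ω : Type*} [MeasurableSpace Ω] (μ : Measure Ω) [IsProbabilityMeasure μ]
    (L : ℕ → Ω → ℕ) (hLmeas : ∀ n, Measurable (L n))
    (hLmono : ∀ ω, Monotone (fun n => L n ω))
    (f : ℝ → ℝ) (hfpos : ∀ t > (0 : ℝ), 0 < f t)
    (hfscale : ∀ t > (0 : ℝ), ∀ ε ∈ Set.Ioo (0 : ℝ) 1, f (t * (1 + ε)) ≤ (1 + ε) * f t)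
    (N : ℝ → Ω → ℕ) (hNmeas : ∀ t, Measurable (N t))
    (hNdist : ∀ t > (0 : ℝ), ∀ k : ℕ, μ {ω | N t ω = k} =
      ENNReal.ofReal (Real.exp (-t) * t ^ k / (Nat.factorial k)))
    (hNindep : ∀ t, IndepFun (N t) (fun ω n => L n ω) μ)
    (hub : ∀ t > (0 : ℝ), (∫ ω, (L (N t ω) ω : ℝ) ∂μ) ≤ f t) :
    limsup (fun n : ℕ => (∫ ω, (L n ω : ℝ) ∂μ) / f n) atTop ≤ 1 := by
  have hXmeas : ∀ n, Measurable (fun ω => (L n ω : ℝ)) :=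
    fun n => measurable_from_nat.comp (hLmeas n)
  have hXnonneg : ∀ n, (0:ℝ) ≤ ∫ ω, (L n ω : ℝ) ∂μ :=
    fun n => integral_nonneg (fun ω => by positivity)
  -- measurability of ω ↦ L (N t ω) ω
  have hgmeas : ∀ t, Measurable (fun ω => (L (N t ω) ω : ℝ)) := by
    intro t
    have h1 : Measurable (fun p : Ω × ℕ => (L p.2 p.1 : ℝ)) :=
      measurable_from_prod_countable_left (fun k => hXmeas k)
    exact h1.comp (measurable_id.prodMk (hNmeas t))
  have hA : ∀ t (k : ℕ), MeasurableSet {ω | N t ω = k} :=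
    fun t k => (hNmeas t) (measurableSet_singleton k)
  by_cases hI : ∀ k : ℕ, Integrable (fun ω => (L k ω : ℝ)) μ
  · by_cases hJ : ∀ t > (0:ℝ), Integrable (fun ω => (L (N t ω) ω : ℝ)) μ
    · -- main case
      have hmain : ∀ ε : ℝ, 0 < ε → ε < 1 →
          limsup (fun n : ℕ => (∫ ω, (L n ω : ℝ) ∂μ) / f n) atTop ≤ (1+ε)^2 := by
        intro ε hε1 hε2
        have hρ0 : (0:ℝ) ≤ (1+ε) * Real.exp (-ε) := by positivity
        have hρ1 : (1+ε) * Real.exp (-ε) < 1 := by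
          have h := Real.add_one_lt_exp (x := ε) hε1.ne'
          rw [Real.exp_neg]
          rw [mul_inv_lt_iff₀ (Real.exp_pos ε), one_mul]
          linarith
        have htend : Tendsto (fun n : ℕ => (n:ℝ) * ((1+ε) * Real.exp (-ε))^n)
            atTop (nhds 0) := by
          have hs := summable_pow_mul_geometric_of_norm_lt_one (R := ℝ) 1
            (r := (1+ε) * Real.exp (-ε)) (by rwa [Real.norm_eq_abs, abs_of_nonneg hρ0])
          simpa [pow_one] using hs.tendsto_atTop_zero
        have hev2 : ∀ᶠ n : ℕ in atTop,
            (n:ℝ) * ((1+ε) * Real.exp (-ε))^n < ε / (1+ε) :=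
          htend.eventually_lt_const (by positivity)
        have hev : ∀ᶠ n : ℕ in atTop,
            (∫ ω, (L n ω : ℝ) ∂μ) / f n ≤ (1+ε)^2 := by
          filter_upwards [hev2, eventually_ge_atTop 1] with n htail hn
          have hn1 : (1:ℝ) ≤ (n:ℝ) := by exact_mod_cast hn
          set t : ℝ := (n:ℝ) * (1+ε) with htdef
          have htpos : (0:ℝ) < t := by positivity
          set s : Set Ω := {ω | n ≤ N t ω} with hsdef
          have hscompl : s = {ω | N t ω < n}ᶜ := by
            ext ω; simp [hsdef, not_lt]
          have hsmeas : MeasurableSet {ω | N t ω < n} := by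
            have : {ω | N t ω < n} = ⋃ k ∈ Finset.range n, {ω | N t ω = k} := by
              ext ω
              simp only [Set.mem_setOf_eq, Set.mem_iUnion, Finset.mem_range]
              exact ⟨fun h => ⟨N t ω, h, rfl⟩, fun ⟨k, hk, he⟩ => he ▸ hk⟩
            rw [this]
            exact Finset.measurableSet_biUnion _ (fun k _ => hA t k)
          -- the tail probability
          have hq : (μ {ω | N t ω < n}).toReal
              = ∑ k ∈ Finset.range n, Real.exp (-t) * t^k / (Nat.factorial k) := by
            have hun : {ω | N t ω < n} = ⋃ k ∈ Finset.range n, {ω | N t ω = k} := by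
              ext ω
              simp only [Set.mem_setOf_eq, Set.mem_iUnion, Finset.mem_range]
              exact ⟨fun h => ⟨N t ω, h, rfl⟩, fun ⟨k, hk, he⟩ => he ▸ hk⟩
            rw [hun, measure_biUnion_finset ?hd (fun k _ => hA t k)]
            case hd =>
              intro i _ j _ hij
              simp only [Function.onFun]
              rw [Set.disjoint_left]
              intro ω h1 h2
              exact hij ((h1 : N t ω = i) ▸ (h2 : N t ω = j) ▸ rfl)
            rw [ENNReal.toReal_sum (fun k _ => by
              rw [hNdist t htpos k]; exact ENNReal.ofReal_ne_top)]
            refine Finset.sum_congr rfl (fun k _ => ?_)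
            rw [hNdist t htpos k, ENNReal.toReal_ofReal (by positivity)]
          have hqle : (μ {ω | N t ω < n}).toReal ≤ ε / (1+ε) := by
            rw [hq]
            exact le_trans (aux_tail ε hε1 n hn) htail.le
          have hB : (1:ℝ)/(1+ε) ≤ (μ s).toReal := by
            rw [hscompl, prob_compl_eq_one_sub hsmeas,
              ENNReal.toReal_sub_of_le prob_le_one ENNReal.one_ne_top, ENNReal.toReal_one]
            have : 1 - ε/(1+ε) = 1/(1+ε) := by field_simp; ring
            linarith [hqle]
          -- independence argument
          set X : Ω → ℝ := fun ω => (L n ω : ℝ) with hXdef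
          set Y : Ω → ℝ := fun ω => s.indicator (fun _ => (1:ℝ)) ω with hYdef
          have hsmeas' : MeasurableSet s := by rw [hscompl]; exact hsmeas.compl
          have hindep : IndepFun X Y μ := by
            have h2 := ((hNindep t).comp
              (φ := fun k : ℕ => ({k : ℕ | n ≤ k}.indicator (fun _ => (1:ℝ))) k)
              (ψ := fun g : ℕ → ℕ => ((g n : ℕ) : ℝ)) (_mγ := inferInstance) (_mγ' := inferInstance)
              measurable_from_nat
              (measurable_from_nat.comp (measurable_pi_apply n))).symm
            have e1 : (fun g : ℕ → ℕ => ((g n : ℕ) : ℝ)) ∘ (fun ω n => L n ω) = X := rfl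
            have e2 : (fun k : ℕ => ({k : ℕ | n ≤ k}.indicator (fun _ => (1:ℝ))) k) ∘ (N t)
                = Y := by
              funext ω
              simp only [Function.comp_apply, hYdef, Set.indicator_apply, hsdef,
                Set.mem_setOf_eq]
            rwa [e1, e2] at h2
          have hYint : Integrable Y μ := (integrable_const (1:ℝ)).indicator hsmeas'
          have hXYint : Integrable (X * Y) μ := by
            refine (hI n).mono ((hXmeas n).mul ?_).aestronglyMeasurable
              (ae_of_all _ (fun ω => ?_))
            · exact measurable_const.indicator hsmeas'
            · simp only [Pi.mul_apply, norm_mul, hXdef, hYdef, Set.indicator_apply]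
              split_ifs <;> simp [abs_of_nonneg]
          have hprod : ∫ ω, (X * Y) ω ∂μ = (∫ ω, X ω ∂μ) * (μ s).toReal := by
            rw [show ∫ ω, (X * Y) ω ∂μ = ∫ ω, (X * Y) ω ∂μ from rfl]
            have := IndepFun.integral_mul_eq_mul_integral hindep (hI n).aestronglyMeasurable hYint.aestronglyMeasurable
            rw [this]
            congr 1
            rw [hYdef]
            exact integral_indicator_one hsmeas'
          have hle1 : ∫ ω, (X * Y) ω ∂μ ≤ ∫ ω, (L (N t ω) ω : ℝ) ∂μ := by
            refine integral_mono hXYint (hJ t htpos) (fun ω => ?_)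
            simp only [Pi.mul_apply, hXdef, hYdef, Set.indicator_apply, hsdef,
              Set.mem_setOf_eq]
            split_ifs with h
            · rw [mul_one]
              exact_mod_cast hLmono ω h
            · rw [mul_zero]; positivity
          have hkey : (∫ ω, X ω ∂μ) * (μ s).toReal ≤ (1+ε) * f n := by
            rw [← hprod]
            refine le_trans (hle1.trans (hub t htpos)) ?_
            exact hfscale (n:ℝ) (by linarith) ε ⟨hε1, hε2⟩
          have hfn : 0 < f n := hfpos _ (by linarith)
          have hXn : (0:ℝ) ≤ ∫ ω, X ω ∂μ := hXnonneg n
          have hEb : ∫ ω, X ω ∂μ ≤ (1+ε)^2 * f n := by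
            have h4 : (∫ ω, X ω ∂μ) * (1/(1+ε)) ≤ (1+ε) * f n :=
              le_trans (mul_le_mul_of_nonneg_left hB hXn) hkey
            have h5 := mul_le_mul_of_nonneg_right h4 (by positivity : (0:ℝ) ≤ 1+ε)
            have h6 : (∫ ω, X ω ∂μ) * (1/(1+ε)) * (1+ε) = ∫ ω, X ω ∂μ := by field_simp
            nlinarith [h5, h6]
          rw [div_le_iff₀ hfn]
          exact hEb
        refine limsup_le_of_le ?_ hev
        refine isCoboundedUnder_le_of_eventually_le atTop (x := 0) ?_
        filter_upwards [eventually_ge_atTop 1] with n hn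
        exact div_nonneg (hXnonneg n) (hfpos _ (by exact_mod_cast hn)).le
      by_contra hcon
      push_neg at hcon
      set r := limsup (fun n : ℕ => (∫ ω, (L n ω : ℝ) ∂μ) / f n) atTop with hr
      have hε : 0 < min (1/2) ((r-1)/4) := by
        refine lt_min (by norm_num) (by linarith)
      have h1 := hmain _ hε (lt_of_le_of_lt (min_le_left _ _) (by norm_num))
      have h2 : min (1/2) ((r-1)/4) ≤ (1:ℝ)/2 := min_le_left _ _
      have h3 : min (1/2) ((r-1)/4) ≤ (r-1)/4 := min_le_right _ _
      nlinarith [hε]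
    · -- some L_{N_t} not integrable: limsup is sInf ∅ = 0
      push_neg at hJ
      obtain ⟨t₀, ht₀, hnint⟩ := hJ
      suffices hS : {a : ℝ | ∀ᶠ n : ℕ in atTop, (∫ ω, (L n ω : ℝ) ∂μ) / f n ≤ a} = ∅ by
        rw [limsup_eq, hS, Real.sInf_empty]
        exact zero_le_one
      refine Set.eq_empty_iff_forall_notMem.2 (fun a ha => ?_)
      simp only [Set.mem_setOf_eq] at ha
      obtain ⟨n₀, hn₀⟩ := eventually_atTop.1 ha
      set m₀ : ℕ := max n₀ 1 with hm₀
      set a' : ℝ := max a 0 with ha'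
      set c₁ : ℝ := ∫ ω, (L m₀ ω : ℝ) ∂μ with hc₁
      set c₂ : ℝ := a' * f 1 with hc₂
      have hc₁0 : 0 ≤ c₁ := hXnonneg m₀
      have hc₂0 : 0 ≤ c₂ := mul_nonneg (le_max_right a 0) (hfpos 1 one_pos).le
      have hEk : ∀ k : ℕ, (∫ ω, (L k ω : ℝ) ∂μ) ≤ c₁ + c₂ * k := by
        intro k
        rcases le_or_gt k m₀ with hk | hk
        · have : (∫ ω, (L k ω : ℝ) ∂μ) ≤ c₁ := by
            refine integral_mono (hI k) (hI m₀) (fun ω => ?_)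
            exact Nat.cast_le.mpr (hLmono ω hk)
          nlinarith [this, mul_nonneg hc₂0 (Nat.cast_nonneg k)]
        · have hk1 : (1:ℝ) < (k:ℝ) := by
            have : 1 < k := lt_of_le_of_lt (le_max_right n₀ 1) hk
            exact_mod_cast this
          have hfk : 0 < f k := hfpos _ (by linarith)
          have hu : (∫ ω, (L k ω : ℝ) ∂μ) / f k ≤ a' :=
            le_trans (hn₀ k (le_of_lt (lt_of_le_of_lt (le_max_left n₀ 1) hk))) (le_max_left a 0)
          have h1 : (∫ ω, (L k ω : ℝ) ∂μ) ≤ a' * f k := by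
            rw [div_le_iff₀ hfk] at hu; exact hu
          have h2 : f k * 1 ≤ (k:ℝ) * f 1 := aux_fgrow hfscale 1 one_pos _ hk1
          nlinarith [le_max_right a 0]
      -- lintegral computation
      have hlint_top : ∫⁻ ω, ENNReal.ofReal ((L (N t₀ ω) ω : ℝ)) ∂μ = ⊤ := by
        by_contra hne
        refine hnint ⟨(hgmeas t₀).aestronglyMeasurable, ?_⟩
        rw [hasFiniteIntegral_iff_ofReal (ae_of_all _ (fun ω => by positivity))]
        exact lt_top_iff_ne_top.2 hne
      have hdecomp : ∫⁻ ω, ENNReal.ofReal ((L (N t₀ ω) ω : ℝ)) ∂μ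
          = ∑' k : ℕ, μ {ω | N t₀ ω = k} * ∫⁻ ω, ENNReal.ofReal ((L k ω : ℝ)) ∂μ := by
        have hfun : ∀ ω, ENNReal.ofReal ((L (N t₀ ω) ω : ℝ))
            = ∑' k : ℕ, Set.indicator {ω' | N t₀ ω' = k}
                (fun ω' => ENNReal.ofReal ((L k ω' : ℝ))) ω := by
          intro ω
          have h0 : ∀ k : ℕ, k ≠ N t₀ ω → Set.indicator {ω' | N t₀ ω' = k}
              (fun ω' => ENNReal.ofReal ((L k ω' : ℝ))) ω = 0 := by
            intro k hk
            apply Set.indicator_of_notMem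
            exact fun h => hk (Eq.symm h)
          have h1 := tsum_eq_single (L := SummationFilter.unconditional ℕ) (f := fun k : ℕ => Set.indicator {ω' | N t₀ ω' = k}
            (fun ω' => ENNReal.ofReal ((L k ω' : ℝ))) ω) (N t₀ ω) h0
          rw [h1]
          simp [Set.indicator_apply]
        calc ∫⁻ ω, ENNReal.ofReal ((L (N t₀ ω) ω : ℝ)) ∂μ
            = ∫⁻ ω, ∑' k : ℕ, Set.indicator {ω' | N t₀ ω' = k}
                (fun ω' => ENNReal.ofReal ((L k ω' : ℝ))) ω ∂μ := by
              exact lintegral_congr hfun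
          _ = ∑' k : ℕ, ∫⁻ ω, Set.indicator {ω' | N t₀ ω' = k}
                (fun ω' => ENNReal.ofReal ((L k ω' : ℝ))) ω ∂μ := by
              refine lintegral_tsum (fun k => ?_)
              exact ((ENNReal.measurable_ofReal.comp (hXmeas k)).indicator (hA t₀ k)).aemeasurable
          _ = ∑' k : ℕ, μ {ω | N t₀ ω = k} * ∫⁻ ω, ENNReal.ofReal ((L k ω : ℝ)) ∂μ := by
              refine tsum_congr (fun k => ?_)
              have heq : (fun ω => Set.indicator {ω' | N t₀ ω' = k}
                  (fun ω' => ENNReal.ofReal ((L k ω' : ℝ))) ω)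
                  = (fun ω => Set.indicator {ω' | N t₀ ω' = k} (fun _ => (1:ℝ≥0∞)) ω
                      * ENNReal.ofReal ((L k ω : ℝ))) := by
                funext ω
                simp only [Set.indicator_apply]
                split_ifs <;> simp
              rw [heq]
              have hindep : IndepFun
                  (fun ω => Set.indicator {ω' | N t₀ ω' = k} (fun _ => (1:ℝ≥0∞)) ω)
                  (fun ω => ENNReal.ofReal ((L k ω : ℝ))) μ := by
                have h2 := (hNindep t₀).comp
                  (φ := fun j : ℕ => ({j : ℕ | j = k}.indicator (fun _ => (1:ℝ≥0∞))) j)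
                  (ψ := fun g : ℕ → ℕ => ENNReal.ofReal ((g k : ℕ) : ℝ)) (_mγ := inferInstance)
                  measurable_from_nat
                  (ENNReal.measurable_ofReal.comp (measurable_from_nat.comp (measurable_pi_apply k)))
                exact h2
              have hmul := lintegral_mul_eq_lintegral_mul_lintegral_of_indepFun
                (f := fun ω => Set.indicator {ω' | N t₀ ω' = k} (fun _ => (1:ℝ≥0∞)) ω)
                (g := fun ω => ENNReal.ofReal ((L k ω : ℝ)))
                (measurable_const.indicator (hA t₀ k))
                (ENNReal.measurable_ofReal.comp (hXmeas k)) hindep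
              simp only [Pi.mul_apply] at hmul
              rw [hmul]
              congr 1
              exact lintegral_indicator_one (hA t₀ k)
      -- summability contradiction
      set π : ℕ → ℝ := fun k => Real.exp (-t₀) * t₀^k / (Nat.factorial k) with hπ
      have hπ0 : ∀ k, 0 ≤ π k := fun k => by positivity
      have hsum : Summable (fun k => π k * (c₁ + c₂ * k)) := by
        refine Summable.of_nonneg_of_le (fun k => ?_) (fun k => ?_)
          (((Real.summable_pow_div_factorial (2*t₀)).mul_left
            (Real.exp (-t₀) * (c₁ + c₂))))
        · exact mul_nonneg (hπ0 k) (by positivity)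
        · have h2k : (k:ℝ) + 1 ≤ 2^k := by
            exact_mod_cast Nat.lt_two_pow_self (n := k)
          have hb : c₁ + c₂ * k ≤ (c₁ + c₂) * 2^k := by nlinarith
          have : π k * (c₁ + c₂ * k) ≤ π k * ((c₁ + c₂) * 2^k) :=
            mul_le_mul_of_nonneg_left hb (hπ0 k)
          refine le_trans this (le_of_eq ?_)
          rw [hπ]
          have : (2*t₀)^k = 2^k * t₀^k := by rw [mul_pow]
          field_simp
          ring
      have hfin : ∑' k : ℕ, μ {ω | N t₀ ω = k} * ∫⁻ ω, ENNReal.ofReal ((L k ω : ℝ)) ∂μ ≠ ⊤ := by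
        have hterm : ∀ k : ℕ, μ {ω | N t₀ ω = k} * ∫⁻ ω, ENNReal.ofReal ((L k ω : ℝ)) ∂μ
            ≤ ENNReal.ofReal (π k * (c₁ + c₂ * k)) := by
          intro k
          rw [hNdist t₀ ht₀ k,
            ← ofReal_integral_eq_lintegral_ofReal (hI k) (ae_of_all _ (fun ω => by positivity)),
            ← ENNReal.ofReal_mul (hπ0 k)]
          exact ENNReal.ofReal_le_ofReal
            (mul_le_mul_of_nonneg_left (hEk k) (hπ0 k))
        refine ne_top_of_le_ne_top ?_ (ENNReal.tsum_le_tsum hterm)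
        rw [← ENNReal.ofReal_tsum_of_nonneg
          (fun k => mul_nonneg (hπ0 k) (by positivity)) hsum]
        exact ENNReal.ofReal_ne_top
      exact hfin (hdecomp ▸ hlint_top)
  · -- some L_k not integrable
    push_neg at hI
    obtain ⟨k, hk⟩ := hI
    have hnon : ∀ m, k ≤ m → ¬ Integrable (fun ω => (L m ω : ℝ)) μ := by
      intro m hm hint
      refine hk (hint.mono (hXmeas k).aestronglyMeasurable (ae_of_all _ (fun ω => ?_)))
      simp only [Real.norm_eq_abs, abs_of_nonneg (by positivity : (0:ℝ) ≤ (L k ω : ℝ)),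
        abs_of_nonneg (by positivity : (0:ℝ) ≤ (L m ω : ℝ))]
      exact_mod_cast hLmono ω hm
    have hev : ∀ᶠ n : ℕ in atTop, (∫ ω, (L n ω : ℝ) ∂μ) / f n ≤ 1 := by
      filter_upwards [eventually_ge_atTop k] with m hm
      rw [integral_undef (hnon m hm), zero_div]
      exact zero_le_one
    refine limsup_le_of_le ?_ hev
    refine isCoboundedUnder_le_of_eventually_le atTop (x := 0) ?_
    filter_upwards [eventually_ge_atTop k] with m hm
    rw [integral_undef (hnon m hm), zero_div]
end

section
/- If p_i ∼ c (log i)^γ i^{−β} with β > 1, γ ∈ ℝ, c > 0, and p is a continuous eventually non-increasing extension, then the solution μ_n of μ_n/p(μ_n) = n satisfies μ_n^{1+β} ∼ c n (log n / (1+β))^γ, i.e. μ_n ∼ ( c n (log n/(1+β))^γ )^{1/(1+β)}. -/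
open Filter

/-- if `P` is a continuous, positive, eventually non-increasing function
with `P(x) ∼ c (log x)^γ x^{−β}` as `x → ∞`, where `β > 1`, `γ ∈ ℝ`, `c > 0`, then the
solution `μ_n` of `μ_n / P(μ_n) = n` satisfies `μ_n^{1+β} ∼ c n (log n/(1+β))^γ`. -/
theorem stmt18 (c β γ : ℝ) (hc : 0 < c) (hβ : 1 < β)
    (P : ℝ → ℝ) (hPcont : Continuous P) (hPpos : ∀ x, 0 < P x)
    (hPanti : ∃ x0 : ℝ, AntitoneOn P (Set.Ici x0))
    (hPasymp : Tendsto (fun x : ℝ => P x / (c * Real.log x ^ γ * x ^ (-β)))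
      atTop (nhds 1))
    (μ : ℕ → ℝ) (hμ : ∀ᶠ n : ℕ in atTop, 0 < μ n ∧ μ n = n * P (μ n)) :
    Tendsto (fun n : ℕ => μ n ^ (1 + β) / (c * n * (Real.log n / (1 + β)) ^ γ))
      atTop (nhds 1) := by
  have hβ0 : (0:ℝ) < 1 + β := by linarith
  -- Step A: μ → ∞
  have hμtop : Tendsto μ atTop atTop := by
    rw [tendsto_atTop]
    intro M
    have hg : ContinuousOn (fun x => x / P x) (Set.Icc (0:ℝ) (max M 0)) :=
      (continuous_id.div hPcont fun x => (hPpos x).ne').continuousOn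
    obtain ⟨K, hK⟩ := isCompact_Icc.exists_bound_of_continuousOn hg
    filter_upwards [hμ, tendsto_natCast_atTop_atTop.eventually_gt_atTop K] with n hn hKn
    obtain ⟨hpos, heq⟩ := hn
    by_contra h
    push_neg at h
    have hmem : μ n ∈ Set.Icc (0:ℝ) (max M 0) := ⟨hpos.le, le_max_of_le_left h.le⟩
    have h1 := hK _ hmem
    have heq2 : μ n / P (μ n) = n := by
      nth_rewrite 1 [heq]
      rw [mul_div_assoc, div_self (hPpos _).ne', mul_one]
    rw [heq2, Real.norm_eq_abs, abs_of_nonneg (by positivity)] at h1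
    linarith
  set L : ℕ → ℝ := fun n => Real.log (μ n) with hLdef
  set r : ℕ → ℝ := fun n => P (μ n) / (c * L n ^ γ * μ n ^ (-β)) with hrdef
  have hrlim : Tendsto r atTop (nhds 1) := hPasymp.comp hμtop
  have hLtop : Tendsto L atTop atTop := Real.tendsto_log_atTop.comp hμtop
  -- eventual facts
  have hev : ∀ᶠ n : ℕ in atTop, 0 < μ n ∧ μ n = n * P (μ n) ∧ 1 ≤ L n ∧
      0 < r n ∧ 1 ≤ Real.log n ∧ (1:ℝ) ≤ n := by
    filter_upwards [hμ, hLtop.eventually_ge_atTop 1,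
      hrlim.eventually (eventually_gt_nhds one_pos),
      (Real.tendsto_log_atTop.comp tendsto_natCast_atTop_atTop).eventually_ge_atTop 1,
      tendsto_natCast_atTop_atTop.eventually_ge_atTop (1:ℝ)] with n h1 h2 h3 h4 h5
    exact ⟨h1.1, h1.2, h2, by linarith [h3], h4, h5⟩
  -- key algebraic identity
  have hkey : ∀ᶠ n : ℕ in atTop, μ n ^ (1 + β) = c * n * (L n ^ γ * r n) := by
    filter_upwards [hev] with n ⟨hpos, heq, hL1, hr0, hlogn, hn1⟩
    have hL0 : (0:ℝ) < L n := by linarith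
    have hne : c * L n ^ γ * μ n ^ (-β) ≠ 0 := by positivity
    have hP : P (μ n) = r n * (c * L n ^ γ * μ n ^ (-β)) := (div_mul_cancel₀ _ hne).symm
    have h2 : (μ n ^ (-β)) * μ n ^ β = 1 := by
      rw [← Real.rpow_add hpos]; simp
    calc μ n ^ (1 + β) = μ n * μ n ^ β := by rw [Real.rpow_add hpos, Real.rpow_one]
      _ = n * (r n * (c * L n ^ γ * μ n ^ (-β))) * μ n ^ β := by rw [← hP, ← heq]
      _ = c * n * (L n ^ γ * r n) * (μ n ^ (-β) * μ n ^ β) := by ring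
      _ = c * n * (L n ^ γ * r n) := by rw [h2, mul_one]
  -- log identity
  set a : ℕ → ℝ := fun n => Real.log c + γ * Real.log (L n) + Real.log (r n) with hadef
  have hlogid : ∀ᶠ n : ℕ in atTop, Real.log n = (1 + β) * L n - a n := by
    filter_upwards [hev, hkey] with n ⟨hpos, heq, hL1, hr0, hlogn, hn1⟩ hkeyn
    have hL0 : (0:ℝ) < L n := by linarith
    have hn0 : (0:ℝ) < n := by linarith
    have h1 : Real.log (μ n ^ (1 + β)) = (1 + β) * L n := Real.log_rpow hpos _
    have h2 : Real.log (c * n * (L n ^ γ * r n)) =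
        Real.log c + Real.log n + (γ * Real.log (L n) + Real.log (r n)) := by
      rw [Real.log_mul (by positivity) (by positivity),
        Real.log_mul hc.ne' hn0.ne',
        Real.log_mul (by positivity) hr0.ne', Real.log_rpow hL0]
    rw [hkeyn, h2] at h1
    simp only [hadef]
    linarith
  -- a n / L n → 0
  have hlogr : Tendsto (fun n => Real.log (r n)) atTop (nhds 0) := by
    have := ((Real.continuousAt_log one_ne_zero).tendsto).comp hrlim
    rw [Real.log_one] at this
    exact this
  have hinvL : Tendsto (fun n => (L n)⁻¹) atTop (nhds 0) := hLtop.inv_tendsto_atTop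
  have hlogLL : Tendsto (fun n => Real.log (L n) / L n) atTop (nhds 0) :=
    (Real.isLittleO_log_id_atTop.tendsto_div_nhds_zero).comp hLtop
  have ha : Tendsto (fun n => a n / L n) atTop (nhds 0) := by
    have h : Tendsto (fun n => Real.log c * (L n)⁻¹ + γ * (Real.log (L n) / L n)
        + Real.log (r n) * (L n)⁻¹) atTop (nhds (Real.log c * 0 + γ * 0 + 0 * 0)) :=
      ((tendsto_const_nhds.mul hinvL).add ((tendsto_const_nhds.mul hlogLL))).add
        (hlogr.mul hinvL)
    simp only [mul_zero, zero_mul, add_zero] at h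
    apply h.congr' ?_
    filter_upwards [hev] with n ⟨hpos, heq, hL1, _⟩
    have hL0 : L n ≠ 0 := by linarith
    simp only [hadef]
    field_simp
  -- t n → 0
  have ht : Tendsto (fun n => a n / ((1 + β) * L n)) atTop (nhds 0) := by
    have h := ha.mul (tendsto_const_nhds (x := (1 + β)⁻¹))
    rw [zero_mul] at h
    apply h.congr
    intro n
    rw [← div_eq_mul_inv, div_div, mul_comm]
  -- Q n → 1
  have hQ : Tendsto (fun n => L n / (Real.log n / (1 + β))) atTop (nhds 1) := by
    have h : Tendsto (fun n => (1 - a n / ((1 + β) * L n))⁻¹) atTop (nhds 1) := by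
      have := (tendsto_const_nhds (x := (1:ℝ)) (f := atTop (α := ℕ))).sub ht
      rw [sub_zero] at this
      simpa using this.inv₀ one_ne_zero
    apply h.congr'
    filter_upwards [hev, hlogid] with n ⟨hpos, heq, hL1, hr0, hlogn, hn1⟩ hid
    have hL0 : (0:ℝ) < L n := by linarith
    have hln0 : Real.log n ≠ 0 := by linarith
    rw [hid]
    field_simp
  have hQγ : Tendsto (fun n => (L n / (Real.log n / (1 + β))) ^ γ) atTop (nhds 1) := by
    have := hQ.rpow_const (p := γ) (Or.inl one_ne_zero)
    simpa using this
  -- conclusion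
  have hfinal := hrlim.mul hQγ
  rw [mul_one] at hfinal
  apply hfinal.congr'
  filter_upwards [hev, hkey] with n ⟨hpos, heq, hL1, hr0, hlogn, hn1⟩ hkeyn
  have hL0 : (0:ℝ) < L n := by linarith
  have hD0 : (0:ℝ) < Real.log n / (1 + β) := by positivity
  have hn0 : (0:ℝ) < n := by linarith
  rw [Real.div_rpow hL0.le hD0.le] at *
  have hDγ : (0:ℝ) < (Real.log n / (1 + β)) ^ γ := Real.rpow_pos_of_pos hD0 _
  have hLγ : (0:ℝ) < L n ^ γ := Real.rpow_pos_of_pos hL0 _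
  rw [hkeyn]
  field_simp
end
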